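/- Let f : ℝⁿ → ℝ be differentiable and μ-strongly convex with μ > 0, i.e., ⟨∇f(χ₁) − ∇f(χ₂), χ₁ − χ₂⟩ ≥ μ‖χ₁ − χ₂‖² for all χ₁, χ₂ ∈ ℝⁿ, and let x* ∈ ℝⁿ satisfy ∇f(x*) = 0. Let t₀ ∈ ℝ, T_p > 0, r a positive integer, 𝒯(t) = (T_p/(T_p + t₀ − t))^r on [t₀, t₀ + T_p), and k > 0. Suppose x : [t₀, t₀ + T_p) → ℝⁿ is differentiable with ẋ(t) = −k 𝒯(t) ∇f(x(t)). Then for every t ∈ [t₀, t₀ + T_p), ‖x(t) − x*‖² ≤ exp(−2kμ ∫_{t₀}^{t} 𝒯(τ) dτ) · ‖x(t₀) − x*‖². -/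

import Mathlib

/-! Along the flow, strong convexity at the critical point `x*` gives
`d/dt ‖x - x*‖² = -2k𝒯 ⟪∇f x, x - x*⟫ ≤ -2kμ𝒯 ‖x - x*‖²`. Hence
`exp (2kμ ∫_{t₀}^t 𝒯) ‖x - x*‖²` has nonpositive derivative and is nonincreasing: a Grönwall
inequality with time-varying rate. -/

open RealInnerProductSpace

noncomputable def Tscale (t₀ Tp : ℝ) (r : ℕ) (t : ℝ) : ℝ := (Tp / (Tp + t₀ - t)) ^ r

open Set

theorem le_exp_sub_mul_of_hasDerivAt_le_neg_mul {V V' I g : ℝ → ℝ} {a b : ℝ} (hab : a ≤ b)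
    (hV : ∀ s ∈ Icc a b, HasDerivAt V (V' s) s) (hI : ∀ s ∈ Icc a b, HasDerivAt I (g s) s)
    (hV' : ∀ s ∈ Icc a b, V' s ≤ -(g s * V s)) :
    V b ≤ Real.exp (I a - I b) * V a := by
  set W : ℝ → ℝ := fun s => Real.exp (I s) * V s
  have hW : ∀ s ∈ Icc a b, HasDerivAt W (Real.exp (I s) * (g s * V s + V' s)) s := fun s hs =>
    ((hI s hs).exp.mul (hV s hs)).congr_deriv (by ring)
  have hanti : AntitoneOn W (Icc a b) :=
    antitoneOn_of_hasDerivWithinAt_nonpos (convex_Icc a b)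
      (fun s hs => (hW s hs).continuousAt.continuousWithinAt)
      (fun s hs => (hW s (interior_subset hs)).hasDerivWithinAt)
      (fun s hs => mul_nonpos_of_nonneg_of_nonpos (Real.exp_pos _).le
        (by linarith [hV' s (interior_subset hs)]))
  have hWab : W b ≤ W a := hanti (left_mem_Icc.2 hab) (right_mem_Icc.2 hab) hab
  calc V b = Real.exp (-I b) * W b := by simp [W, ← mul_assoc, ← Real.exp_add]
    _ ≤ Real.exp (-I b) * W a := by gcongr
    _ = Real.exp (I a - I b) * V a := by simp only [W, ← mul_assoc, ← Real.exp_add]; ring_nf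

theorem ContinuousOn.hasDerivAt_integral_right {E : Type*} [NormedAddCommGroup E]
    [NormedSpace ℝ E] [CompleteSpace E] {g : ℝ → E} {U : Set ℝ} {a b : ℝ} (hU : IsOpen U)
    (hg : ContinuousOn g U) (hab : uIcc a b ⊆ U) :
    HasDerivAt (fun u => ∫ τ in a..u, g τ) (g b) b :=
  intervalIntegral.integral_hasDerivAt_right ((hg.mono hab).intervalIntegrable)
    (hg.stronglyMeasurableAtFilter hU b (hab right_mem_uIcc))
    (hg.continuousAt (hU.mem_nhds (hab right_mem_uIcc)))

theorem continuousOn_Tscale (t₀ Tp : ℝ) (r : ℕ) : ContinuousOn (Tscale t₀ Tp r) (Iio (t₀ + Tp)) :=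
  (continuousOn_const.div (by fun_prop) fun s hs => by
    simp only [mem_Iio] at hs; linarith).pow r

theorem Tscale_nonneg {t₀ Tp : ℝ} (r : ℕ) {s : ℝ} (hs : s ∈ Ico t₀ (t₀ + Tp)) :
    0 ≤ Tscale t₀ Tp r s := by
  obtain ⟨h₁, h₂⟩ := hs
  exact pow_nonneg (div_nonneg (by linarith) (by linarith)) r

theorem strongly_convex_gradient_flow_distance_estimate_general
    (n : ℕ) (f : EuclideanSpace ℝ (Fin n) → ℝ)
    (μ : ℝ)
    (hSC : ∀ χ₁ χ₂ : EuclideanSpace ℝ (Fin n),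
      μ * ‖χ₁ - χ₂‖ ^ 2 ≤ ⟪gradient f χ₁ - gradient f χ₂, χ₁ - χ₂⟫)
    (xstar : EuclideanSpace ℝ (Fin n)) (hstar : gradient f xstar = 0)
    (t₀ Tp : ℝ) (r : ℕ) (k : ℝ) (hk : 0 < k)
    (x : ℝ → EuclideanSpace ℝ (Fin n))
    (hx : ∀ t ∈ Set.Ico t₀ (t₀ + Tp),
      HasDerivAt x (-(k * Tscale t₀ Tp r t) • gradient f (x t)) t) :
    ∀ t ∈ Set.Ico t₀ (t₀ + Tp),
      ‖x t - xstar‖ ^ 2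
        ≤ Real.exp (-2 * k * μ * ∫ τ in t₀..t, Tscale t₀ Tp r τ)
            * ‖x t₀ - xstar‖ ^ 2 := by
  intro t ht
  have hIcc : Icc t₀ t ⊆ Ico t₀ (t₀ + Tp) := Icc_subset_Ico_right ht.2
  have hI : ∀ s ∈ Icc t₀ t, HasDerivAt (fun u => 2 * k * μ * ∫ τ in t₀..u, Tscale t₀ Tp r τ)
      (2 * k * μ * Tscale t₀ Tp r s) s := fun s hs =>
    ((continuousOn_Tscale t₀ Tp r).hasDerivAt_integral_right isOpen_Iio
      (by rw [uIcc_of_le hs.1]; exact fun u hu => (hIcc ⟨hu.1, hu.2.trans hs.2⟩).2)).const_mul _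
  have hV : ∀ s ∈ Icc t₀ t, HasDerivAt (‖x · - xstar‖ ^ 2)
      (2 * ⟪x s - xstar, -(k * Tscale t₀ Tp r s) • gradient f (x s)⟫) s := fun s hs =>
    ((hx s (hIcc hs)).sub_const xstar).norm_sq
  have hV' : ∀ s ∈ Icc t₀ t, 2 * ⟪x s - xstar, -(k * Tscale t₀ Tp r s) • gradient f (x s)⟫
      ≤ -(2 * k * μ * Tscale t₀ Tp r s * ‖x s - xstar‖ ^ 2) := fun s hs => by
    have hmono : μ * ‖x s - xstar‖ ^ 2 ≤ ⟪gradient f (x s), x s - xstar⟫ := by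
      simpa [hstar] using hSC (x s) xstar
    have hkT : 0 ≤ k * Tscale t₀ Tp r s := mul_nonneg hk.le (Tscale_nonneg r (hIcc hs))
    rw [real_inner_smul_right, real_inner_comm]
    nlinarith
  convert le_exp_sub_mul_of_hasDerivAt_le_neg_mul ht.1 hV hI hV' using 3
  simp

/-- exponential-in-`∫𝒯` distance estimate for the time-varying
feedback gradient flow of a `μ`-strongly convex function:
`‖x(t) - x*‖² ≤ exp(-2kμ∫_{t₀}^{t}𝒯)‖x(t₀) - x*‖²`. -/
theorem strongly_convex_gradient_flow_distance_estimate
    (n : ℕ) (f : EuclideanSpace ℝ (Fin n) → ℝ) (hf : Differentiable ℝ f)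
    (μ : ℝ) (hμ : 0 < μ)
    (hSC : ∀ χ₁ χ₂ : EuclideanSpace ℝ (Fin n),
      μ * ‖χ₁ - χ₂‖ ^ 2 ≤ ⟪gradient f χ₁ - gradient f χ₂, χ₁ - χ₂⟫)
    (xstar : EuclideanSpace ℝ (Fin n)) (hstar : gradient f xstar = 0)
    (t₀ Tp : ℝ) (hTp : 0 < Tp) (r : ℕ) (hr : 0 < r) (k : ℝ) (hk : 0 < k)
    (x : ℝ → EuclideanSpace ℝ (Fin n))
    (hx : ∀ t ∈ Set.Ico t₀ (t₀ + Tp),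
      HasDerivAt x (-(k * Tscale t₀ Tp r t) • gradient f (x t)) t) :
    ∀ t ∈ Set.Ico t₀ (t₀ + Tp),
      ‖x t - xstar‖ ^ 2
        ≤ Real.exp (-2 * k * μ * ∫ τ in t₀..t, Tscale t₀ Tp r τ)
            * ‖x t₀ - xstar‖ ^ 2 :=
  strongly_convex_gradient_flow_distance_estimate_general n f μ hSC xstar hstar t₀ Tp r k hk x hx
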